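/- Fix reals a < b and positive constants ρ, A, I, E, T₀. Let w, p_w : ℝ × ℝ → ℝ be smooth and assume the implicit Euler–Bernoulli dynamics on ℝ × [a,b]: ∂ₜw = p_w/(ρA) and ∂ₜp_w = T₀ ∂ₓ²w − E I ∂ₓ⁴w. Define H_c(t) := (1/2)∫ₐᵇ ( p_w²/(ρA) + T₀ (∂ₓw)² + E I (∂ₓ²w)² ) dx. Then for all t, H_c'(t) = [ ∂ₜw · ( T₀ ∂ₓw − E I ∂ₓ³w ) + ∂ₜ∂ₓw · E I ∂ₓ²w ]ₐᵇ, where [g]ₐᵇ := g(t,b) − g(t,a). -/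

import Mathlib

open Function ContDiff


/-- Time partial derivative of a function `ℝ × ℝ → ℝ` (first variable). -/
noncomputable def dt (h : ℝ → ℝ → ℝ) : ℝ → ℝ → ℝ := fun t x => deriv (fun s => h s x) t

/-- Space partial derivative of a function `ℝ × ℝ → ℝ` (second variable). -/
noncomputable def dx (h : ℝ → ℝ → ℝ) : ℝ → ℝ → ℝ := fun t x => deriv (fun y => h t y) x

section aux
variable {h : ℝ → ℝ → ℝ}

lemma lineT (t x : ℝ) : HasDerivAt (fun s : ℝ => (s, x)) ((1:ℝ), (0:ℝ)) t :=
  (hasDerivAt_id t).prodMk (hasDerivAt_const t x)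

lemma lineX (t x : ℝ) : HasDerivAt (fun y : ℝ => (t, y)) ((0:ℝ), (1:ℝ)) x :=
  (hasDerivAt_const x t).prodMk (hasDerivAt_id x)

lemma dt_eq_fderiv' (hh : ContDiff ℝ (∞) (uncurry h)) (t x : ℝ) :
    dt h t x = fderiv ℝ (uncurry h) (t, x) (1, 0) := by
  have hd := ((hh.differentiable (by norm_num)) (t, x)).hasFDerivAt
  have h2 : HasDerivAt (fun s => h s x) (fderiv ℝ (uncurry h) (t, x) (1, 0)) t :=
    by exact hd.comp_hasDerivAt t (lineT t x)
  exact h2.deriv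

lemma hasDerivAt_dt (hh : ContDiff ℝ (∞) (uncurry h)) (t x : ℝ) :
    HasDerivAt (fun s => h s x) (dt h t x) t := by
  rw [dt_eq_fderiv' hh]
  exact ((hh.differentiable (by norm_num)) (t, x)).hasFDerivAt.comp_hasDerivAt t (lineT t x)

lemma dx_eq_fderiv' (hh : ContDiff ℝ (∞) (uncurry h)) (t x : ℝ) :
    dx h t x = fderiv ℝ (uncurry h) (t, x) (0, 1) := by
  have hd := ((hh.differentiable (by norm_num)) (t, x)).hasFDerivAt
  have h2 : HasDerivAt (fun y => h t y) (fderiv ℝ (uncurry h) (t, x) (0, 1)) x :=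
    hd.comp_hasDerivAt x (lineX t x)
  exact h2.deriv

lemma hasDerivAt_dx (hh : ContDiff ℝ (∞) (uncurry h)) (t x : ℝ) :
    HasDerivAt (fun y => h t y) (dx h t x) x := by
  rw [dx_eq_fderiv' hh]
  exact ((hh.differentiable (by norm_num)) (t, x)).hasFDerivAt.comp_hasDerivAt x (lineX t x)

lemma contDiff_fderiv_apply (hh : ContDiff ℝ (∞) (uncurry h)) (v : ℝ × ℝ) :
    ContDiff ℝ (∞) (fun p : ℝ × ℝ => fderiv ℝ (uncurry h) p v) := by
  exact (ContinuousLinearMap.apply ℝ ℝ v).contDiff.comp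
    (hh.fderiv_right (m := ∞) (by norm_num))

lemma contDiff_dt (hh : ContDiff ℝ (∞) (uncurry h)) :
    ContDiff ℝ (∞) (uncurry (dt h)) := by
  have : uncurry (dt h) = fun p : ℝ × ℝ => fderiv ℝ (uncurry h) p (1, 0) := by
    funext p; exact dt_eq_fderiv' hh p.1 p.2
  rw [this]; exact contDiff_fderiv_apply hh _

lemma contDiff_dx (hh : ContDiff ℝ (∞) (uncurry h)) :
    ContDiff ℝ (∞) (uncurry (dx h)) := by
  have : uncurry (dx h) = fun p : ℝ × ℝ => fderiv ℝ (uncurry h) p (0, 1) := by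
    funext p; exact dx_eq_fderiv' hh p.1 p.2
  rw [this]; exact contDiff_fderiv_apply hh _

lemma clairaut (hh : ContDiff ℝ (∞) (uncurry h)) (t x : ℝ) :
    dt (dx h) t x = dx (dt h) t x := by
  set f := uncurry h
  have hdiff : Differentiable ℝ f := hh.differentiable (by norm_num)
  have hf1 : ∀ p, HasFDerivAt f (fderiv ℝ f p) p := fun p => (hdiff p).hasFDerivAt
  have hf' : Differentiable ℝ (fderiv ℝ f) :=
    (hh.fderiv_right (m := ∞) (by norm_num)).differentiable (by norm_num)
  have hf2 : HasFDerivAt (fderiv ℝ f) (fderiv ℝ (fderiv ℝ f) (t, x)) (t, x) :=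
    (hf' (t, x)).hasFDerivAt
  have sym := second_derivative_symmetric hf1 hf2 ((1:ℝ), (0:ℝ)) ((0:ℝ), (1:ℝ))
  have key : ∀ u v : ℝ × ℝ,
      fderiv ℝ (fun p => fderiv ℝ f p v) (t, x) u = fderiv ℝ (fderiv ℝ f) (t, x) u v := by
    intro u v
    have : HasFDerivAt (fun p => fderiv ℝ f p v)
        ((ContinuousLinearMap.apply ℝ ℝ v).comp (fderiv ℝ (fderiv ℝ f) (t, x))) (t, x) :=
      ((ContinuousLinearMap.apply ℝ ℝ v).hasFDerivAt).comp (t, x) hf2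
    rw [this.fderiv]; rfl
  have e1 : uncurry (dx h) = fun p : ℝ × ℝ => fderiv ℝ f p (0, 1) := by
    funext p; exact dx_eq_fderiv' hh p.1 p.2
  have e2 : uncurry (dt h) = fun p : ℝ × ℝ => fderiv ℝ f p (1, 0) := by
    funext p; exact dt_eq_fderiv' hh p.1 p.2
  calc dt (dx h) t x = fderiv ℝ (uncurry (dx h)) (t, x) (1, 0) :=
        dt_eq_fderiv' (contDiff_dx hh) t x
    _ = fderiv ℝ (fderiv ℝ f) (t, x) (1,0) (0,1) := by rw [e1, key]
    _ = fderiv ℝ (fderiv ℝ f) (t, x) (0,1) (1,0) := sym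
    _ = fderiv ℝ (uncurry (dt h)) (t, x) (0, 1) := by rw [e2, key]
    _ = dx (dt h) t x := (dx_eq_fderiv' (contDiff_dt hh) t x).symm

end aux

/-- Power balance for the implicit Euler–Bernoulli beam:
`H_c'(t) = [∂ₜw (T₀∂ₓw − EI∂ₓ³w) + ∂ₜ∂ₓw · EI∂ₓ²w]ₐᵇ`. -/

theorem stmt12 (a b : ℝ) (hab : a < b) (ρ A I E T₀ : ℝ)
    (hρ : 0 < ρ) (hA : 0 < A) (hI : 0 < I) (hE : 0 < E) (hT : 0 < T₀)
    (w pw : ℝ → ℝ → ℝ)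
    (hw : ContDiff ℝ (⊤ : ℕ∞) (Function.uncurry w)) (hpw : ContDiff ℝ (⊤ : ℕ∞) (Function.uncurry pw))
    (hdyn₁ : ∀ t : ℝ, ∀ x ∈ Set.Icc a b, dt w t x = pw t x / (ρ * A))
    (hdyn₂ : ∀ t : ℝ, ∀ x ∈ Set.Icc a b,
      dt pw t x = T₀ * dx (dx w) t x - E * I * dx (dx (dx (dx w))) t x) :
    ∀ t : ℝ,
      HasDerivAt
        (fun s => (1 / 2 : ℝ) * ∫ x in a..b,
          ((pw s x) ^ 2 / (ρ * A) + T₀ * (dx w s x) ^ 2 + E * I * (dx (dx w) s x) ^ 2))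
        ((dt w t b * (T₀ * dx w t b - E * I * dx (dx (dx w)) t b)
            + dt (dx w) t b * (E * I * dx (dx w) t b))
          - (dt w t a * (T₀ * dx w t a - E * I * dx (dx (dx w)) t a)
            + dt (dx w) t a * (E * I * dx (dx w) t a))) t := by
  intro t
  have hρA : (ρ * A) ≠ 0 := by positivity
  have hw' : ContDiff ℝ (∞) (uncurry w) := hw.of_le (by simp)
  have hpw' : ContDiff ℝ (∞) (uncurry pw) := hpw.of_le (by simp)
  have hw1 : ContDiff ℝ (∞) (uncurry (dx w)) := contDiff_dx hw'
  have hw2 : ContDiff ℝ (∞) (uncurry (dx (dx w))) := contDiff_dx hw1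
  have hw3 : ContDiff ℝ (∞) (uncurry (dx (dx (dx w)))) := contDiff_dx hw2
  have hw4 : ContDiff ℝ (∞) (uncurry (dx (dx (dx (dx w))))) := contDiff_dx hw3
  have htw : ContDiff ℝ (∞) (uncurry (dt w)) := contDiff_dt hw'
  have htw1 : ContDiff ℝ (∞) (uncurry (dt (dx w))) := contDiff_dt hw1
  -- the integrand
  set f : ℝ → ℝ → ℝ := fun s x =>
    (pw s x) ^ 2 / (ρ * A) + T₀ * (dx w s x) ^ 2 + E * I * (dx (dx w) s x) ^ 2 with hfdef
  have hf : ContDiff ℝ (∞) (uncurry f) := by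
    exact (((hpw'.pow 2).div_const (ρ * A)).add (contDiff_const.mul (hw1.pow 2))).add
      (contDiff_const.mul (hw2.pow 2))
  -- the boundary function
  set g : ℝ → ℝ → ℝ := fun t x =>
    dt w t x * (T₀ * dx w t x - E * I * dx (dx (dx w)) t x)
      + dt (dx w) t x * (E * I * dx (dx w) t x) with hgdef
  have hg : ContDiff ℝ (∞) (uncurry g) := by
    exact (htw.mul ((contDiff_const.mul hw1).sub (contDiff_const.mul hw3))).add
      (htw1.mul (contDiff_const.mul hw2))
  -- Step A : differentiation under the integral sign
  obtain ⟨C, hC⟩ := (isCompact_Icc.prod isCompact_uIcc :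
      IsCompact (Set.Icc (t-1) (t+1) ×ˢ Set.uIcc a b)).exists_bound_of_continuousOn
    ((contDiff_dt hf).continuous.continuousOn)
  have hstepA : HasDerivAt (fun s => ∫ x in a..b, f s x) (∫ x in a..b, dt f t x) t := by
    have key := intervalIntegral.hasDerivAt_integral_of_dominated_loc_of_deriv_le
      (μ := MeasureTheory.volume) (F := f) (F' := dt f) (x₀ := t) (a := a) (b := b)
      (bound := fun _ => C) (s := Metric.ball t 1) (Metric.ball_mem_nhds t one_pos)
      (Filter.Eventually.of_forall fun s =>
        ((hf.continuous.comp (Continuous.prodMk_right s)).aestronglyMeasurable))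
      ((hf.continuous.comp (Continuous.prodMk_right t)).intervalIntegrable a b)
      (((contDiff_dt hf).continuous.comp (Continuous.prodMk_right t)).aestronglyMeasurable)
      ?_ (intervalIntegrable_const) ?_
    · exact key.2
    · refine Filter.Eventually.of_forall fun x hx s hs => ?_
      refine hC (s, x) ⟨?_, Set.uIoc_subset_uIcc hx⟩
      have := Real.dist_eq s t ▸ Metric.mem_ball.mp hs
      constructor <;> [linarith [abs_le.mp this.le] ; linarith [(abs_le.mp this.le).2]]
    · exact Filter.Eventually.of_forall fun x _ s _ => hasDerivAt_dt hf s x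
  -- Step B : pointwise identity on [a,b]
  have hkey : ∀ x ∈ Set.Icc a b, dt f t x = 2 * dx g t x := by
    intro x hx
    have h1 := hasDerivAt_dt hpw' t x
    have h2 := hasDerivAt_dt hw1 t x
    have h3 := hasDerivAt_dt hw2 t x
    have hD : HasDerivAt (fun s => f s x)
        (2 * pw t x * dt pw t x / (ρ * A) + T₀ * (2 * dx w t x * dt (dx w) t x)
          + E * I * (2 * dx (dx w) t x * dt (dx (dx w)) t x)) t := by
      have := (((h1.pow 2).div_const (ρ * A)).add ((h2.pow 2).const_mul T₀)).add
        ((h3.pow 2).const_mul (E * I))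
      refine this.congr_deriv ?_
      push_cast; ring
    have hdtf : dt f t x = _ := (hasDerivAt_dt hf t x).unique hD
    have q1 := hasDerivAt_dx htw t x
    have q2 := hasDerivAt_dx hw1 t x
    have q3 := hasDerivAt_dx hw3 t x
    have q4 := hasDerivAt_dx htw1 t x
    have q5 := hasDerivAt_dx hw2 t x
    have hDg : HasDerivAt (fun y => g t y)
        (dx (dt w) t x * (T₀ * dx w t x - E * I * dx (dx (dx w)) t x)
          + dt w t x * (T₀ * dx (dx w) t x - E * I * dx (dx (dx (dx w))) t x)
          + (dx (dt (dx w)) t x * (E * I * dx (dx w) t x)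
            + dt (dx w) t x * (E * I * dx (dx (dx w)) t x))) x := by
      have := (q1.mul ((q2.const_mul T₀).sub (q3.const_mul (E * I)))).add
        (q4.mul (q5.const_mul (E * I)))
      refine this.congr_deriv ?_
      rfl
    have hdxg : dx g t x = _ := (hasDerivAt_dx hg t x).unique hDg
    rw [hdtf, hdxg, hdyn₂ t x hx, (clairaut hw' t x).symm, (clairaut hw1 t x).symm]
    have hpweq : pw t x = ρ * A * dt w t x := by
      rw [hdyn₁ t x hx]; field_simp
    rw [hpweq]
    field_simp
    ring
  -- Step B' : the integral of dt f
  have hFTC : (∫ x in a..b, dx g t x) = g t b - g t a := by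
    refine intervalIntegral.integral_eq_sub_of_hasDerivAt
      (fun x _ => hasDerivAt_dx hg t x) ?_
    exact ((contDiff_dx hg).continuous.comp (Continuous.prodMk_right t)).intervalIntegrable a b
  have hcongr : (∫ x in a..b, dt f t x) = ∫ x in a..b, 2 * dx g t x := by
    refine intervalIntegral.integral_congr fun x hx => ?_
    exact hkey x (by rwa [Set.uIcc_of_le hab.le] at hx)
  -- conclusion
  have hfinal := hstepA.const_mul (1/2 : ℝ)
  refine hfinal.congr_deriv ?_
  rw [hcongr, intervalIntegral.integral_const_mul, hFTC]
  ring
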